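/- arXiv:2005.09300 — 3 statements merged into one kernel-verified Lean document; each statement's English description precedes it below -/
import Mathlib

section
/- (Chung–Erdős inequality) Let (Ω, A, m) be a probability space, N ≥ 1 an integer, and E_1, …, E_N measurable sets with m(⋃_{n=1}^N E_n) > 0. Then m(⋃_{n=1}^N E_n) ≥ (∑_{s=1}^N m(E_s))^2 / ∑_{s,t=1}^N m(E_s ∩ E_t). -/
/-!
With `f = ∑ₛ 1_{E_s}` we have `∫ f = ∑ₛ m(E_s)` and `∫ f² = ∑ₛₜ m(E_s ∩ E_t)`. Since `f` lives on
`U = ⋃ₛ E_s`, Cauchy–Schwarz for the restriction of `m` to `U` gives `(∫ f)² ≤ m(U) · ∫ f²`.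
-/

open MeasureTheory ENNReal

namespace MeasureTheory

variable {Ω ι : Type*} [MeasurableSpace Ω] {μ : Measure Ω}

theorem sq_lintegral_le_measure_univ_mul_lintegral_sq {f : Ω → ℝ≥0∞} (hf : AEMeasurable f μ) :
    (∫⁻ ω, f ω ∂μ) ^ 2 ≤ μ Set.univ * ∫⁻ ω, f ω ^ 2 ∂μ := by
  have holder := ENNReal.lintegral_mul_le_Lp_mul_Lq μ Real.HolderConjugate.two_two hf
    (aemeasurable_const (b := (1 : ℝ≥0∞)))
  simp only [Pi.mul_apply, mul_one, one_rpow, lintegral_const, one_mul] at holder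
  calc (∫⁻ ω, f ω ∂μ) ^ 2
      ≤ ((∫⁻ ω, f ω ^ (2 : ℝ) ∂μ) ^ (1 / 2 : ℝ) * μ Set.univ ^ (1 / 2 : ℝ)) ^ (2 : ℝ) := by
        rw [← rpow_two]; gcongr
    _ = μ Set.univ * ∫⁻ ω, f ω ^ 2 ∂μ := by
        rw [mul_rpow_of_nonneg _ _ zero_le_two, ← rpow_mul, ← rpow_mul, mul_comm]
        norm_num

variable [Fintype ι] {E : ι → Set Ω}

theorem lintegral_sum_indicator_one (hE : ∀ i, MeasurableSet (E i)) :
    ∫⁻ ω, ∑ i, (E i).indicator 1 ω ∂μ = ∑ i, μ (E i) := by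
  rw [lintegral_finsetSum _ fun i _ => measurable_one.indicator (hE i)]
  simp only [lintegral_indicator_one (hE _)]

theorem lintegral_sq_sum_indicator_one (hE : ∀ i, MeasurableSet (E i)) :
    ∫⁻ ω, (∑ i, (E i).indicator 1 ω) ^ 2 ∂μ = ∑ i, ∑ j, μ (E i ∩ E j) := by
  have sq_sum : ∀ ω, (∑ i, (E i).indicator (1 : Ω → ℝ≥0∞) ω) ^ 2 =
      ∑ i, ∑ j, (E i ∩ E j).indicator 1 ω := fun ω => by
    simp only [sq, Finset.sum_mul_sum, Set.inter_indicator_one, Pi.mul_apply]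
  simp only [sq_sum, ← lintegral_sum_indicator_one fun j => (hE _).inter (hE j)]
  exact lintegral_finsetSum _ fun i _ => Finset.measurable_sum _
    fun j _ => measurable_one.indicator ((hE i).inter (hE j))

theorem sq_sum_measure_le_measure_iUnion_mul_sum_measure_inter
    (hE : ∀ i, MeasurableSet (E i)) :
    (∑ i, μ (E i)) ^ 2 ≤ μ (⋃ i, E i) * ∑ i, ∑ j, μ (E i ∩ E j) := by
  have cs := sq_lintegral_le_measure_univ_mul_lintegral_sq (μ := μ.restrict (⋃ i, E i))
    (Finset.measurable_sum Finset.univ fun i _ => measurable_one.indicator (hE i)).aemeasurable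
  have hsub : ∀ i, E i ⊆ ⋃ i, E i := Set.subset_iUnion E
  rw [lintegral_sum_indicator_one hE, lintegral_sq_sum_indicator_one hE,
    Measure.restrict_apply_univ] at cs
  simpa only [Measure.restrict_eq_self _ (hsub _),
    Measure.restrict_eq_self _ (Set.inter_subset_left.trans (hsub _))] using cs

theorem sq_sum_measureReal_le_measureReal_iUnion_mul_sum_measureReal_inter [IsFiniteMeasure μ]
    (hE : ∀ i, MeasurableSet (E i)) :
    (∑ i, μ.real (E i)) ^ 2 ≤ μ.real (⋃ i, E i) * ∑ i, ∑ j, μ.real (E i ∩ E j) := by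
  simp only [measureReal_def, ← toReal_sum fun _ _ => measure_ne_top μ _,
    ← toReal_sum fun _ _ => sum_ne_top.mpr fun _ _ => measure_ne_top μ _, ← toReal_pow,
    ← toReal_mul]
  exact toReal_mono (mul_ne_top (measure_ne_top μ _) (sum_ne_top.mpr fun _ _ =>
    sum_ne_top.mpr fun _ _ => measure_ne_top μ _))
    (sq_sum_measure_le_measure_iUnion_mul_sum_measure_inter hE)

end MeasureTheory

theorem chung_erdos_general {Ω : Type*} [MeasurableSpace Ω] (m : Measure Ω) [IsProbabilityMeasure m]
    (N : ℕ) (E : Fin N → Set Ω) (hE : ∀ i, MeasurableSet (E i)) :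
    (∑ s, (m (E s)).toReal) ^ 2 / (∑ s, ∑ t, (m (E s ∩ E t)).toReal) ≤
      (m (⋃ i, E i)).toReal :=
  div_le_of_le_mul₀ (by positivity) toReal_nonneg
    (sq_sum_measureReal_le_measureReal_iUnion_mul_sum_measureReal_inter hE)

/-- **Chung–Erdős inequality.** For a probability space `(Ω, 𝒜, m)`, an integer `N ≥ 1`,
and measurable sets `E_1, …, E_N` with `m(⋃ E_n) > 0`,
`m(⋃ E_n) ≥ (∑ m(E_s))² / ∑_{s,t} m(E_s ∩ E_t)`. -/
theorem chung_erdos {Ω : Type*} [MeasurableSpace Ω] (m : Measure Ω) [IsProbabilityMeasure m]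
    (N : ℕ) (hN : 1 ≤ N) (E : Fin N → Set Ω) (hE : ∀ i, MeasurableSet (E i))
    (hpos : 0 < m (⋃ i, E i)) :
    (∑ s, (m (E s)).toReal) ^ 2 / (∑ s, ∑ t, (m (E s ∩ E t)).toReal) ≤
      (m (⋃ i, E i)).toReal :=
  chung_erdos_general m N E hE
end

section
/- For any function ψ: ℕ → [0,∞), if ∑_{n=1}^∞ ψ(2^n)^γ < ∞ where γ = log 2 / log 3, then μ(W₂(ψ)) = 0, where μ is the natural measure on the middle-third Cantor set. -/
/-!
A point of `W₂(ψ)` lies, for infinitely many `n`, within `r = ψ(2ⁿ)/2ⁿ` of a dyadic rational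
`p/2ⁿ`. Choosing `k` with `3ᵏ ≈ 2ⁿ`, the Cantor set lies in `2ᵏ` intervals of length
`3⁻ᵏ ≤ 2⁻ⁿ`, and each of them is within `r ≤ 2⁻ⁿ` of at most three such rationals. So the
points of the Cantor set that are `r`-close to some `p/2ⁿ` are covered by `3 · 2ᵏ` balls of
radius `r`, with `∑ diam^γ ≲ 2ᵏ (ψ(2ⁿ)/2ⁿ)^γ ≈ ψ(2ⁿ)^γ` since `2ᵏ = 3^{kγ} ≈ 2^{nγ}`.
Summability of these bounds gives `μ(W₂(ψ)) = 0` by the Hausdorff–Cantelli lemma.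
-/

open MeasureTheory

/-- γ = log 2 / log 3. -/
noncomputable def cantorDim : ℝ := Real.log 2 / Real.log 3

/-- The natural measure on the middle-third Cantor set. -/
noncomputable def cantorMeasure : Measure ℝ :=
  (μH[cantorDim] : Measure ℝ).restrict cantorSet

/-- `W₂(ψ)`: points of `[0,1]` within `ψ(q)/q` of infinitely many dyadic rationals `p/q`,
`q = 2^n`. -/
def W2 (ψ : ℕ → ℝ) : Set ℝ :=
  {x ∈ Set.Icc (0:ℝ) 1 |
    {pn : ℤ × ℕ | |x - (pn.1 : ℝ) / 2 ^ pn.2| < ψ (2 ^ pn.2) / 2 ^ pn.2}.Infinite}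

open Filter Topology ENNReal Metric Set

theorem hausdorffMeasure_limsup_eq_zero {X : Type*} [EMetricSpace X] [MeasurableSpace X]
    [BorelSpace X] {d : ℝ} (hd : 0 < d) {ι : ℕ → Type*} [∀ n, Countable (ι n)]
    (t : ∀ n, ι n → Set X) (hsum : ∑' n, ∑' i, ediam (t n i) ^ d ≠ ∞) :
    μH[d] (limsup (fun n => ⋃ i, t n i) atTop) = 0 := by
  set tail : ℕ → ℝ≥0∞ := fun N => ∑' m, ∑' i, ediam (t (m + N) i) ^ d
  have htail : Tendsto tail atTop (𝓝 0) := ENNReal.tendsto_sum_nat_add _ hsum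
  -- Since `d > 0`, the tail sums also control the diameters of the individual sets.
  have hdiam (N : ℕ) (q : Σ m, ι (m + N)) : ediam (t (q.1 + N) q.2) ≤ tail N ^ d⁻¹ := by
    rw [ENNReal.le_rpow_inv_iff hd]
    exact (ENNReal.le_tsum q.2).trans
      (ENNReal.le_tsum (f := fun m => ∑' i, ediam (t (m + N) i) ^ d) q.1)
  have hradius : Tendsto (fun N => tail N ^ d⁻¹) atTop (𝓝 0) :=
    (ENNReal.continuous_rpow_const.tendsto' 0 0 (ENNReal.zero_rpow_of_pos (inv_pos.2 hd))).comp
      htail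
  have hcover (N : ℕ) :
      limsup (fun n => ⋃ i, t n i) atTop ⊆ ⋃ q : Σ m, ι (m + N), t (q.1 + N) q.2 := by
    intro x hx
    obtain ⟨n, hNn, hxn⟩ := frequently_atTop.1 (mem_limsup_iff_frequently_mem.1 hx) N
    obtain ⟨i, hi⟩ := mem_iUnion.1 hxn
    obtain ⟨m, rfl⟩ := Nat.exists_eq_add_of_le' hNn
    exact mem_iUnion.2 ⟨⟨m, i⟩, hi⟩
  refine nonpos_iff_eq_zero.1 ((Measure.hausdorffMeasure_le_liminf_tsum (l := atTop) d _ _ hradius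
    _ (.of_forall hdiam) (.of_forall hcover)).trans_eq ?_)
  simp_rw [ENNReal.tsum_sigma']
  exact htail.liminf_eq

lemma finite_setOf_abs_sub_div_lt (x r : ℝ) {q : ℝ} (hq : 0 < q) :
    {p : ℤ | |x - p / q| < r}.Finite := by
  have hK := Int.tendsto_coe_cofinite.eventually_mem
    (isCompact_closedBall (x * q) (r * q)).compl_mem_cocompact
  refine (Filter.eventually_cofinite.1 hK).subset fun p hp => ?_
  rw [mem_ofPred_eq, mem_compl_iff, not_not, mem_closedBall, Real.dist_eq]
  calc |(p : ℝ) - x * q| = |(x - p / q) * q| := by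
        rw [sub_mul, div_mul_cancel₀ _ hq.ne', abs_sub_comm]
    _ = |x - p / q| * q := by rw [abs_mul, abs_of_pos hq]
    _ ≤ r * q := by gcongr; exact hp.le

lemma frequently_exists_of_infinite {α : Type*} {S : Set (α × ℕ)} (hS : S.Infinite)
    (hfin : ∀ n, {a | (a, n) ∈ S}.Finite) : ∃ᶠ n in atTop, ∃ a, (a, n) ∈ S := by
  refine frequently_atTop.2 fun N => ?_
  by_contra! h
  refine hS (((finite_Iio N).biUnion fun n _ => (hfin n).prod (finite_singleton n)).subset ?_)
  rintro ⟨a, n⟩ han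
  exact mem_biUnion (not_le.1 fun hn => h n hn a han) ⟨han, rfl⟩

lemma frequently_exists_abs_sub_lt_of_mem_W2 {ψ : ℕ → ℝ} {x : ℝ} (hx : x ∈ W2 ψ) :
    ∃ᶠ n in atTop, ∃ p : ℤ, |x - p / 2 ^ n| < ψ (2 ^ n) / 2 ^ n :=
  frequently_exists_of_infinite hx.2 fun n =>
    finite_setOf_abs_sub_div_lt x (ψ (2 ^ n) / 2 ^ n) (pow_pos two_pos n)

-- `p` lies in the open interval `((a - r) q, (a - r) q + (ℓ + 2r) q)` of length at most `3`.
lemma exists_fin_three_eq_floor_add {q a ℓ r x : ℝ} (hq : 0 < q) (hℓ : ℓ * q ≤ 1)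
    (hr : r * q ≤ 1) (hx : x ∈ Icc a (a + ℓ)) {p : ℤ} (hp : |x - p / q| < r) :
    ∃ j : Fin 3, p = ⌊(a - r) * q⌋ + 1 + j := by
  have hpq : (x - r) * q < p ∧ p < (x + r) * q := by
    rw [← lt_div_iff₀ hq, ← div_lt_iff₀ hq]
    constructor <;> linarith [abs_lt.1 hp]
  have hlow : ⌊(a - r) * q⌋ < p := Int.floor_lt.2 (by nlinarith [hx.1])
  have hhigh : p < ⌊(a - r) * q⌋ + 4 := by
    have hfloor := Int.lt_floor_add_one ((a - r) * q)
    have hp_lt : (p : ℝ) < ⌊(a - r) * q⌋ + 4 := by nlinarith [hx.2]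
    exact_mod_cast hp_lt
  refine ⟨⟨(p - ⌊(a - r) * q⌋ - 1).toNat, by omega⟩, ?_⟩
  rw [Fin.val_mk]
  omega

lemma cantorDim_pos : 0 < cantorDim :=
  div_pos (Real.log_pos one_lt_two) (Real.log_pos (by norm_num))

lemma three_rpow_cantorDim : (3 : ℝ) ^ cantorDim = 2 := by
  rw [cantorDim, Real.log_div_log, Real.rpow_logb] <;> norm_num

noncomputable def cantorLevel (n : ℕ) : ℕ := ⌈n * cantorDim⌉₊

lemma two_pow_le_three_pow_cantorLevel (n : ℕ) : (2 : ℝ) ^ n ≤ 3 ^ cantorLevel n := by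
  rw [← three_rpow_cantorDim, ← Real.rpow_natCast, ← Real.rpow_mul (by norm_num), mul_comm,
    ← Real.rpow_natCast 3]
  exact Real.rpow_le_rpow_of_exponent_le (by norm_num) (Nat.le_ceil _)

lemma two_pow_cantorLevel_le (n : ℕ) :
    (2 : ℝ) ^ cantorLevel n ≤ 2 * ((2 : ℝ) ^ n) ^ cantorDim := by
  have hk : (cantorLevel n : ℝ) ≤ n * cantorDim + 1 :=
    (Nat.ceil_lt_add_one (mul_nonneg n.cast_nonneg cantorDim_pos.le)).le
  calc (2 : ℝ) ^ cantorLevel n ≤ 2 ^ (n * cantorDim + 1) := by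
        rw [← Real.rpow_natCast]
        exact Real.rpow_le_rpow_of_exponent_le (by norm_num) hk
    _ = 2 * ((2 : ℝ) ^ n) ^ cantorDim := by
        rw [Real.rpow_add_one two_ne_zero, Real.rpow_mul zero_le_two, Real.rpow_natCast, mul_comm]

/-- The left endpoints of the `2ᵏ` intervals making up `preCantorSet k`. -/
noncomputable def cantorLeftEnds (k : ℕ) : Finset ℝ :=
  Finset.univ.image fun b : Fin k → Bool => ∑ i : Fin k, (bif b i then 2 else 0 : ℝ) / 3 ^ (i.1 + 1)

lemma card_cantorLeftEnds_le (k : ℕ) : (cantorLeftEnds k).card ≤ 2 ^ k :=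
  Finset.card_image_le.trans (by simp)

lemma cantorSet_subset_iUnion_Icc (k : ℕ) :
    cantorSet ⊆ ⋃ a ∈ cantorLeftEnds k, Icc a (a + 3⁻¹ ^ k) := by
  intro x hx
  have ha : ∑ i ∈ Finset.range k, Real.ofDigitsTerm (cantorToTernary x) i ∈ cantorLeftEnds k := by
    refine Finset.mem_image.2 ⟨fun i => (cantorToBinary x).get i, Finset.mem_univ _, ?_⟩
    rw [Finset.sum_range]
    refine Finset.sum_congr rfl fun i _ => ?_
    have hdigit : cantorToTernary x i = cond ((cantorToBinary x).get i) 2 0 := rfl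
    simp only [Real.ofDigitsTerm, hdigit]
    cases (cantorToBinary x).get i <;> simp [div_eq_mul_inv]
  exact mem_biUnion ha ⟨ofDigits_cantorToTernary_sum_le hx,
    by linarith [le_ofDigits_cantorToTernary_sum hx (n := k)]⟩

/-- Balls of radius `r` about the (at most three per interval) points `p / 2ⁿ` that can be
`r`-close to a Cantor interval of level `cantorLevel n`. -/
noncomputable def dyadicCantorCover (n : ℕ) (r : ℝ)
    (i : cantorLeftEnds (cantorLevel n) × Fin 3) : Set ℝ :=
  ball ((⌊(i.1 - r) * 2 ^ n⌋ + 1 + i.2 : ℤ) / 2 ^ n) r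

lemma mem_iUnion_dyadicCantorCover {n : ℕ} {r x : ℝ} (hr : r * 2 ^ n ≤ 1) (hx : x ∈ cantorSet)
    {p : ℤ} (hp : |x - p / 2 ^ n| < r) : x ∈ ⋃ i, dyadicCantorCover n r i := by
  obtain ⟨a, ha, hxa⟩ := mem_iUnion₂.1 (cantorSet_subset_iUnion_Icc (cantorLevel n) hx)
  have hℓ : (3⁻¹ : ℝ) ^ cantorLevel n * 2 ^ n ≤ 1 := by
    rw [inv_pow, inv_mul_le_one₀ (by positivity)]
    exact two_pow_le_three_pow_cantorLevel n
  obtain ⟨j, rfl⟩ := exists_fin_three_eq_floor_add (by positivity) hℓ hr hxa hp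
  refine mem_iUnion.2 ⟨(⟨a, ha⟩, j), ?_⟩
  rwa [dyadicCantorCover, mem_ball, Real.dist_eq]

lemma tsum_ediam_dyadicCantorCover_le (n : ℕ) {s : ℝ} (hs : 0 ≤ s) :
    ∑' i, ediam (dyadicCantorCover n (s / 2 ^ n) i) ^ cantorDim ≤
      ENNReal.ofReal (6 * 2 ^ cantorDim * s ^ cantorDim) := by
  have hγ := cantorDim_pos
  have hball (i) : ediam (dyadicCantorCover n (s / 2 ^ n) i) ^ cantorDim ≤
      ENNReal.ofReal ((2 * (s / 2 ^ n)) ^ cantorDim) := by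
    rw [← ENNReal.ofReal_rpow_of_nonneg (by positivity) hγ.le, ENNReal.ofReal_mul zero_le_two,
      ENNReal.ofReal_ofNat, dyadicCantorCover, ← eball_ofReal]
    exact ENNReal.rpow_le_rpow ediam_eball_le hγ.le
  have hcount : ((cantorLeftEnds (cantorLevel n)).card * 3 : ℝ) * (2 * (s / 2 ^ n)) ^ cantorDim ≤
      6 * 2 ^ cantorDim * s ^ cantorDim := by
    have hcard : ((cantorLeftEnds (cantorLevel n)).card : ℝ) ≤ 2 * ((2 : ℝ) ^ n) ^ cantorDim :=
      (Nat.cast_le.2 (card_cantorLeftEnds_le _)).trans (by exact_mod_cast two_pow_cantorLevel_le n)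
    calc _ ≤ (2 * ((2 : ℝ) ^ n) ^ cantorDim * 3) * (2 * (s / 2 ^ n)) ^ cantorDim := by gcongr
      _ = 6 * (2 ^ n * (2 * (s / 2 ^ n))) ^ cantorDim := by
          rw [Real.mul_rpow (x := 2 ^ n) (by positivity) (by positivity)]; ring
      _ = 6 * 2 ^ cantorDim * s ^ cantorDim := by
          rw [show (2 : ℝ) ^ n * (2 * (s / 2 ^ n)) = 2 * s by field_simp,
            Real.mul_rpow zero_le_two hs, mul_assoc]
  calc _ ≤ ∑' _ : cantorLeftEnds (cantorLevel n) × Fin 3,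
        ENNReal.ofReal ((2 * (s / 2 ^ n)) ^ cantorDim) := ENNReal.tsum_le_tsum hball
    _ = ENNReal.ofReal (((cantorLeftEnds (cantorLevel n)).card * 3 : ℝ) *
          (2 * (s / 2 ^ n)) ^ cantorDim) := by
        rw [tsum_fintype, Finset.sum_const, nsmul_eq_mul, ENNReal.ofReal_mul (by positivity)]
        simp
    _ ≤ _ := ENNReal.ofReal_le_ofReal hcount

/-- If `∑ ψ(2ⁿ)^γ < ∞` then `μ(W₂(ψ)) = 0`. -/
theorem cantorMeasure_W2_eq_zero_of_summable_rpow (ψ : ℕ → ℝ) (hψ : ∀ n, 0 ≤ ψ n)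
    (hsum : Summable fun n : ℕ => ψ (2 ^ n) ^ cantorDim) :
    cantorMeasure (W2 ψ) = 0 := by
  have hψ_le : ∀ᶠ n in atTop, ψ (2 ^ n) ≤ 1 := by
    filter_upwards [hsum.tendsto_atTop_zero.eventually_lt_const one_pos] with n hn
    by_contra! h
    linarith [Real.one_le_rpow h.le cantorDim_pos.le]
  have hcover : cantorSet ∩ W2 ψ ⊆
      limsup (fun n => ⋃ i, dyadicCantorCover n (ψ (2 ^ n) / 2 ^ n) i) atTop := by
    rintro x ⟨hxC, hxW⟩
    refine mem_limsup_iff_frequently_mem.2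
      (((frequently_exists_abs_sub_lt_of_mem_W2 hxW).and_eventually hψ_le).mono ?_)
    rintro n ⟨⟨p, hp⟩, hn⟩
    exact mem_iUnion_dyadicCantorCover (by rwa [div_mul_cancel₀ _ (by positivity)]) hxC hp
  have hfinite :
      ∑' n, ∑' i, ediam (dyadicCantorCover n (ψ (2 ^ n) / 2 ^ n) i) ^ cantorDim ≠ ∞ := by
    refine ne_top_of_le_ne_top ?_
      (ENNReal.tsum_le_tsum fun n => tsum_ediam_dyadicCantorCover_le n (hψ _))
    rw [← ENNReal.ofReal_tsum_of_nonneg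
      (fun n => mul_nonneg (by positivity) (Real.rpow_nonneg (hψ _) _)) (hsum.mul_left _)]
    exact ENNReal.ofReal_ne_top
  rw [cantorMeasure, Measure.restrict_apply' isClosed_cantorSet.measurableSet, inter_comm]
  exact measure_mono_null hcover (hausdorffMeasure_limsup_eq_zero cantorDim_pos _ hfinite)
end

section
/- Let n, m be positive integers with n ≤ m and ψ: ℕ → [0,∞). If the balls B(a/2ⁿ, ψ(2ⁿ)/2ⁿ) and B(b/2^m, ψ(2^m)/2^m) intersect (with a, b integers), then the integer h = b − 2^{m−n}a satisfies |h| < 2^{m−n}ψ(2ⁿ) + ψ(2^m); consequently, A_n ∩ A_m is contained in the union over integers h with |h| < 2^{m−n}ψ(2ⁿ) + ψ(2^m) of the sets X_h = ⋃_{a=0}^{2ⁿ} B(a/2ⁿ + h/2^m, ψ(2^m)/2^m). -/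
open Metric Finset

theorem abs_sub_mul_lt_of_ball_inter_ball_nonempty {a b r s c k : ℝ} (hc : 0 < c) (hk : 0 < k)
    (h : (ball (a / c) (r / c) ∩ ball (b / (k * c)) (s / (k * c))).Nonempty) :
    |b - k * a| < k * r + s := by
  have hkc : 0 < k * c := mul_pos hk hc
  have hdist : |a / c - b / (k * c)| < r / c + s / (k * c) := by
    simpa only [Real.dist_eq] using dist_lt_add_of_nonempty_ball_inter_ball h
  calc |b - k * a| = |k * c * (b / (k * c) - a / c)| := by
        congr 1
        field_simp
    _ = k * c * |a / c - b / (k * c)| := by rw [abs_mul, abs_of_pos hkc, abs_sub_comm]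
    _ < k * c * (r / c + s / (k * c)) := mul_lt_mul_of_pos_left hdist hkc
    _ = k * r + s := by field_simp

theorem intersection_decomposition_general (ψ : ℕ → ℝ) (n m : ℕ)
    (hnm : n ≤ m) :
    (∀ a b : ℤ,
      (ball ((a:ℝ) / 2 ^ n) (ψ (2 ^ n) / 2 ^ n) ∩
        ball ((b:ℝ) / 2 ^ m) (ψ (2 ^ m) / 2 ^ m)).Nonempty →
      |(b:ℝ) - 2 ^ (m - n) * (a:ℝ)| < 2 ^ (m - n) * ψ (2 ^ n) + ψ (2 ^ m)) ∧
    ((⋃ a ∈ range (2 ^ n + 1), ball ((a:ℝ) / 2 ^ n) (ψ (2 ^ n) / 2 ^ n)) ∩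
        (⋃ b ∈ range (2 ^ m + 1), ball ((b:ℝ) / 2 ^ m) (ψ (2 ^ m) / 2 ^ m)) ⊆
      ⋃ (h : ℤ) (_ : |(h:ℝ)| < 2 ^ (m - n) * ψ (2 ^ n) + ψ (2 ^ m)),
        ⋃ a ∈ range (2 ^ n + 1),
          ball ((a:ℝ) / 2 ^ n + (h:ℝ) / 2 ^ m) (ψ (2 ^ m) / 2 ^ m)) := by
  have hpow : (2:ℝ) ^ m = 2 ^ (m - n) * 2 ^ n := by rw [← pow_add, Nat.sub_add_cancel hnm]
  have hbound : ∀ a b : ℝ,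
      (ball (a / 2 ^ n) (ψ (2 ^ n) / 2 ^ n) ∩ ball (b / 2 ^ m) (ψ (2 ^ m) / 2 ^ m)).Nonempty →
      |b - 2 ^ (m - n) * a| < 2 ^ (m - n) * ψ (2 ^ n) + ψ (2 ^ m) := by
    rw [hpow]
    exact fun a b ↦ abs_sub_mul_lt_of_ball_inter_ball_nonempty (by positivity) (by positivity)
  refine ⟨fun a b ↦ hbound a b, ?_⟩
  rintro x ⟨hxA, hxB⟩
  simp only [Set.mem_iUnion, exists_prop] at hxA hxB ⊢
  obtain ⟨a, ha, hxa⟩ := hxA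
  obtain ⟨b, -, hxb⟩ := hxB
  refine ⟨b - 2 ^ (m - n) * a, ?_, a, ha, ?_⟩
  · push_cast
    exact hbound a b ⟨x, hxa, hxb⟩
  · have hcentre : (a:ℝ) / 2 ^ n + ((b - 2 ^ (m - n) * a : ℤ) : ℝ) / 2 ^ m = b / 2 ^ m := by
      push_cast
      rw [hpow]
      field_simp
      ring
    rwa [hcentre]

/-- If the dyadic balls `B(a/2ⁿ, ψ(2ⁿ)/2ⁿ)` and `B(b/2^m, ψ(2^m)/2^m)` intersect
(`n ≤ m`), then `h = b − 2^{m−n}a` satisfies `|h| < 2^{m−n}ψ(2ⁿ) + ψ(2^m)`; consequently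
`A_n ∩ A_m ⊆ ⋃_{|h| < 2^{m−n}ψ(2ⁿ) + ψ(2^m)} X_h` with
`X_h = ⋃_{a=0}^{2ⁿ} B(a/2ⁿ + h/2^m, ψ(2^m)/2^m)`. -/
theorem intersection_decomposition (ψ : ℕ → ℝ) (hψ : ∀ i, 0 ≤ ψ i) (n m : ℕ)
    (hn : 0 < n) (hnm : n ≤ m) :
    (∀ a b : ℤ,
      (ball ((a:ℝ) / 2 ^ n) (ψ (2 ^ n) / 2 ^ n) ∩
        ball ((b:ℝ) / 2 ^ m) (ψ (2 ^ m) / 2 ^ m)).Nonempty →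
      |(b:ℝ) - 2 ^ (m - n) * (a:ℝ)| < 2 ^ (m - n) * ψ (2 ^ n) + ψ (2 ^ m)) ∧
    ((⋃ a ∈ range (2 ^ n + 1), ball ((a:ℝ) / 2 ^ n) (ψ (2 ^ n) / 2 ^ n)) ∩
        (⋃ b ∈ range (2 ^ m + 1), ball ((b:ℝ) / 2 ^ m) (ψ (2 ^ m) / 2 ^ m)) ⊆
      ⋃ (h : ℤ) (_ : |(h:ℝ)| < 2 ^ (m - n) * ψ (2 ^ n) + ψ (2 ^ m)),
        ⋃ a ∈ range (2 ^ n + 1),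
          ball ((a:ℝ) / 2 ^ n + (h:ℝ) / 2 ^ m) (ψ (2 ^ m) / 2 ^ m)) :=
  intersection_decomposition_general ψ n m hnm
end
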